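/- Soundness of the linear case (cl_T = ∅) of abstract unification for Clique-Sharing+Freeness: let x be a variable, T a finite set of variables, cl a clique set and sh a sharing set with no clique of cl intersecting T, and let S = ↓cl ∪ sh. Then (S \ S_{{x}∪T}) ∪ (S_{{x}} ⊎ S_T*) ⊆ ↓(rel̄({x} ∪ T, cl) ∪ (cl_{{x}} ⊎ {⋃ sh_T})) ∪ ((sh \ sh_{{x}∪T}) ∪ (sh_{{x}} ⊎ sh_T*)), where ⋃ sh_T is the union of all groups of sh intersecting T. -/

import Mathlib

variable {V : Type*} [DecidableEq V]

/-- `℘⁰(C)`: the set of nonempty subsets of a finite set `C`. -/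
def pow0 (C : Finset V) : Set (Finset V) := {u | u ⊆ C ∧ u ≠ ∅}

/-- Concretization of a clique set: `↓cl = ⋃_{C ∈ cl} ℘⁰(C)`. -/
def conc (cl : Set (Finset V)) : Set (Finset V) := ⋃ C ∈ cl, pow0 C

/-- Binary union: `s₁ ⊎ s₂ = {a ∪ b : a ∈ s₁, b ∈ s₂}`. -/
def bin (s₁ s₂ : Set (Finset V)) : Set (Finset V) :=
  {u | ∃ a ∈ s₁, ∃ b ∈ s₂, u = a ∪ b}

/-- Star union: all unions `⋃ T` over finite nonempty subfamilies `T ⊆ s`. -/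
def starU (s : Set (Finset V)) : Set (Finset V) :=
  {u | ∃ T : Finset (Finset V), T.Nonempty ∧ ↑T ⊆ s ∧ u = T.sup id}

/-- `s_G`: the part of `s` relevant to `G` (groups intersecting `G`). -/
def relG (G : Finset V) (s : Set (Finset V)) : Set (Finset V) :=
  {u ∈ s | u ∩ G ≠ ∅}

/-- `rel̄(S, cl) = {C \ S : C ∈ cl} \ {∅}`. -/
def relbar (S : Finset V) (cl : Set (Finset V)) : Set (Finset V) :=
  {d | (∃ C ∈ cl, d = C \ S) ∧ d ≠ ∅}

/-- `project(G, s) = {u ∩ G : u ∈ s} \ {∅}`. -/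
def sproject (G : Finset V) (s : Set (Finset V)) : Set (Finset V) :=
  {d | (∃ u ∈ s, d = u ∩ G) ∧ d ≠ ∅}

/-- Abstract unification of the Sharing domain for `x = t`, `T` the variables of `t`. -/
def amgu (x : V) (T : Finset V) (s : Set (Finset V)) : Set (Finset V) :=
  (s \ relG ({x} ∪ T) s) ∪ bin (starU (relG {x} s)) (starU (relG T s))

/-- The `extend` function of the Sharing domain. -/
def extendSh (Call : Set (Finset V)) (G : Finset V) (Prime : Set (Finset V)) :
    Set (Finset V) :=
  {u ∈ Call | u ∩ G = ∅} ∪ {u ∈ starU (relG G Call) | u ∩ G ∈ Prime}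

/-- Union of all groups of `s` containing `x`, as a set of variables. -/
def occSet (s : Set (Finset V)) (x : V) : Set V :=
  ⋃ u ∈ {u ∈ s | x ∈ u}, (↑u : Set V)

/-!
No clique of `cl` meets `T`, so every group of `S = ↓cl ∪ sh` relevant to `T` already lies in
`sh`, and each element of `S_T*` is contained in `⋃ sh_T`. A group below a clique `C` that avoids
`{x} ∪ T` lies below `C \ ({x} ∪ T)`; a group below a clique `C ∋ x`, joined with an element of
`S_T*`, lies below `C ∪ ⋃ sh_T`. The remaining groups come from `sh` alone.
-/

theorem mem_conc_iff {α : Type*} {cl : Set (Finset α)} {u : Finset α} :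
    u ∈ conc cl ↔ ∃ C ∈ cl, u ⊆ C ∧ u ≠ ∅ := by
  simp [conc, pow0, and_left_comm]

theorem conc_mono {α : Type*} {cl cl' : Set (Finset α)} (h : cl ⊆ cl') : conc cl ⊆ conc cl' := by
  intro u hu
  obtain ⟨C, hC, hsub, hne⟩ := mem_conc_iff.mp hu
  exact mem_conc_iff.mpr ⟨C, h hC, hsub, hne⟩

theorem relG_union (G : Finset V) (s t : Set (Finset V)) :
    relG G (s ∪ t) = relG G s ∪ relG G t :=
  Set.sep_union

theorem inter_ne_empty_of_subset {u C G : Finset V} (hsub : u ⊆ C) (hu : u ∩ G ≠ ∅) :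
    C ∩ G ≠ ∅ := fun hC =>
  hu (Finset.subset_empty.mp (hC ▸ Finset.inter_subset_inter_right hsub))

theorem relG_conc_eq_empty {G : Finset V} {cl : Set (Finset V)} (h : relG G cl = ∅) :
    relG G (conc cl) = ∅ := by
  refine Set.eq_empty_of_forall_notMem fun u ⟨hu, huG⟩ => ?_
  obtain ⟨C, hC, hsub, -⟩ := mem_conc_iff.mp hu
  exact (Set.eq_empty_iff_forall_notMem.mp h) C ⟨hC, inter_ne_empty_of_subset hsub huG⟩

theorem starU_mono {s t : Set (Finset V)} (h : s ⊆ t) : starU s ⊆ starU t := by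
  rintro u ⟨F, hFne, hF, rfl⟩
  exact ⟨F, hFne, hF.trans h, rfl⟩

theorem subset_of_mem_starU {s : Set (Finset V)} {U : Finset V} (h : ∀ v ∈ s, v ⊆ U) :
    ∀ u ∈ starU s, u ⊆ U := by
  rintro u ⟨F, -, hF, rfl⟩
  exact Finset.sup_le fun v hv => h v (hF hv)

theorem mem_conc_relbar_of_inter_eq_empty {G u : Finset V} {cl : Set (Finset V)}
    (hu : u ∈ conc cl) (huG : u ∩ G = ∅) : u ∈ conc (relbar G cl) := by
  obtain ⟨C, hC, hsub, hne⟩ := mem_conc_iff.mp hu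
  have hsub' : u ⊆ C \ G := fun y hy =>
    Finset.mem_sdiff.mpr ⟨hsub hy, fun hyG =>
      Finset.notMem_empty y (huG ▸ Finset.mem_inter.mpr ⟨hy, hyG⟩)⟩
  have hne' : C \ G ≠ ∅ := fun h => hne (Finset.subset_empty.mp (h ▸ hsub'))
  exact mem_conc_iff.mpr ⟨C \ G, ⟨⟨C, hC, rfl⟩, hne'⟩, hsub', hne⟩

theorem union_mem_conc_bin {G U a b : Finset V} {cl : Set (Finset V)}
    (ha : a ∈ relG G (conc cl)) (hb : b ⊆ U) : a ∪ b ∈ conc (bin (relG G cl) {U}) := by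
  obtain ⟨ha, haG⟩ := ha
  obtain ⟨C, hC, hsub, hne⟩ := mem_conc_iff.mp ha
  refine mem_conc_iff.mpr ⟨C ∪ U, ⟨C, ⟨hC, inter_ne_empty_of_subset hsub haG⟩, U, rfl, rfl⟩,
    Finset.union_subset_union hsub hb, fun h => hne ?_⟩
  exact Finset.subset_empty.mp (h ▸ Finset.subset_union_left)

/-- Soundness of the linear case (cl_T = ∅) of abstract unification for
    Clique-Sharing+Freeness. -/
theorem amgu_linear_sound_empty (x : V) (T : Finset V) (cl sh : Set (Finset V))
    (UT : Finset V)
    (hclT : relG T cl = ∅)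
    (hUT : (↑UT : Set V) = ⋃ u ∈ relG T sh, (↑u : Set V)) :
    ((conc cl ∪ sh) \ relG ({x} ∪ T) (conc cl ∪ sh))
      ∪ bin (relG {x} (conc cl ∪ sh)) (starU (relG T (conc cl ∪ sh))) ⊆
    conc (relbar ({x} ∪ T) cl ∪ bin (relG {x} cl) {UT})
      ∪ ((sh \ relG ({x} ∪ T) sh) ∪ bin (relG {x} sh) (starU (relG T sh))) := by
  have hrelT : relG T (conc cl ∪ sh) = relG T sh := by
    rw [relG_union, relG_conc_eq_empty hclT, Set.empty_union]
  have hUT_ub : ∀ v ∈ relG T sh, v ⊆ UT := fun v hv => by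
    rw [← Finset.coe_subset, hUT]
    exact Set.subset_biUnion_of_mem (u := fun u : Finset V => (↑u : Set V)) hv
  rintro u (⟨hu | hu, hnr⟩ | ⟨a, ha, b, hb, rfl⟩)
  · have huG : u ∩ ({x} ∪ T) = ∅ := not_not.mp fun h => hnr ⟨Or.inl hu, h⟩
    exact Or.inl (conc_mono Set.subset_union_left (mem_conc_relbar_of_inter_eq_empty hu huG))
  · exact Or.inr (Or.inl ⟨hu, fun h => hnr ⟨Or.inr hu, h.2⟩⟩)
  · rw [hrelT] at hb; rw [relG_union] at ha
    rcases ha with ha | ha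
    · exact Or.inl (conc_mono Set.subset_union_right
        (union_mem_conc_bin ha (subset_of_mem_starU hUT_ub b hb)))
    · exact Or.inr (Or.inr ⟨a, ha, b, hb, rfl⟩)
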